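/- For fixed y with 1/2 < y < 1, the function g(x) = (2-2y)·h((1-x)/2) - h((1-y)(1-x)) is strictly concave on (0,1), with (ln 2)·g''(x) = -(1-y)(2y-1)/((x+1)(x + y - xy)) < 0. -/

import Mathlib

noncomputable def binEntropy (p : ℝ) : ℝ :=
  -p * Real.logb 2 p - (1 - p) * Real.logb 2 (1 - p)

lemma binEntropy_eq (p : ℝ) : binEntropy p = Real.binEntropy p / Real.log 2 := by
  unfold binEntropy Real.binEntropy
  rw [Real.logb, Real.logb, Real.log_inv, Real.log_inv]
  ring

lemma aux_pos {y x : ℝ} (hy : 1/2 < y) (hy1 : y < 1) (hx0 : 0 < x) (hx1 : x < 1) :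
    0 < x + y - x*y := by nlinarith

/-- first derivative function -/
noncomputable def g1 (y x : ℝ) : ℝ :=
  (1 - y) * (Real.log (x + y - x*y) - Real.log (1 + x) - Real.log (1 - y)) / Real.log 2

lemma hasDerivAt_g (y : ℝ) (hy : 1/2 < y) (hy1 : y < 1) {x : ℝ} (hx : x ∈ Set.Ioo (0:ℝ) 1) :
    HasDerivAt (fun x : ℝ => (2 - 2*y) * binEntropy ((1 - x)/2) - binEntropy ((1 - y)*(1 - x)))
      (g1 y x) x := by
  obtain ⟨hx0, hx1⟩ := hx
  have hL : Real.log 2 ≠ 0 := by positivity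
  have h1x : (0:ℝ) < 1 - x := by linarith
  have h1y : (0:ℝ) < 1 - y := by linarith
  have hq0 : (0:ℝ) < (1 - y)*(1 - x) := by positivity
  have hq1 : (1 - y)*(1 - x) < 1 := by nlinarith
  have hs : 0 < x + y - x*y := aux_pos hy hy1 hx0 hx1
  -- derivative of inner affine maps
  have hi1 : HasDerivAt (fun x : ℝ => (1 - x)/2) (-(1/2)) x := by
    have := ((hasDerivAt_id x).const_sub 1).div_const 2
    simpa using this.congr_deriv (by norm_num)
  have hi2 : HasDerivAt (fun x : ℝ => (1 - y)*(1 - x)) (-(1-y)) x := by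
    simpa using ((hasDerivAt_id x).const_sub 1).const_mul (1-y)
  have hb1 : HasDerivAt (fun x : ℝ => Real.binEntropy ((1 - x)/2))
      ((Real.log (1 - (1-x)/2) - Real.log ((1-x)/2)) * (-(1/2))) x :=
    (Real.hasDerivAt_binEntropy (by positivity) (by intro h; nlinarith)).comp x hi1
  have hb2 : HasDerivAt (fun x : ℝ => Real.binEntropy ((1 - y)*(1 - x)))
      ((Real.log (1 - (1-y)*(1-x)) - Real.log ((1-y)*(1-x))) * (-(1-y))) x :=
    by have h := Real.hasDerivAt_binEntropy hq0.ne' hq1.ne; exact h.comp x hi2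
  have hD : HasDerivAt (fun x : ℝ =>
      ((2 - 2*y) * Real.binEntropy ((1 - x)/2) - Real.binEntropy ((1 - y)*(1 - x))) / Real.log 2)
      (((2 - 2*y) * ((Real.log (1 - (1-x)/2) - Real.log ((1-x)/2)) * (-(1/2)))
        - (Real.log (1 - (1-y)*(1-x)) - Real.log ((1-y)*(1-x))) * (-(1-y))) / Real.log 2) x :=
    ((hb1.const_mul (2 - 2*y)).sub hb2).div_const _
  have heq : (fun x : ℝ => (2 - 2*y) * binEntropy ((1 - x)/2) - binEntropy ((1 - y)*(1 - x)))
      = fun x : ℝ =>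
      ((2 - 2*y) * Real.binEntropy ((1 - x)/2) - Real.binEntropy ((1 - y)*(1 - x))) / Real.log 2 := by
    funext z; rw [binEntropy_eq, binEntropy_eq]; ring
  rw [heq]
  convert hD using 1
  rw [g1]
  have e1 : (1 : ℝ) - (1-x)/2 = (1+x)/2 := by ring
  have e2 : (1 : ℝ) - (1-y)*(1-x) = x + y - x*y := by ring
  rw [e1, e2, Real.log_div (by linarith) (by norm_num),
      Real.log_div (by linarith) (by norm_num),
      Real.log_mul (by linarith) (by linarith)]
  field_simp
  ring

lemma hasDerivAt_g1 (y : ℝ) (hy : 1/2 < y) (hy1 : y < 1) {x : ℝ} (hx : x ∈ Set.Ioo (0:ℝ) 1) :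
    HasDerivAt (g1 y) (-((1 - y)*(2*y - 1))/((x + 1)*(x + y - x*y)) / Real.log 2) x := by
  obtain ⟨hx0, hx1⟩ := hx
  have hs : 0 < x + y - x*y := aux_pos hy hy1 hx0 hx1
  have h1x : (0:ℝ) < 1 + x := by linarith
  have hlog1 : HasDerivAt (fun x : ℝ => Real.log (x + y - x*y)) ((1 - y)/(x + y - x*y)) x := by
    have hi : HasDerivAt (fun x : ℝ => x + y - x*y) (1 - y) x := by
      have h := (((hasDerivAt_id x).add_const y).sub ((hasDerivAt_id x).mul_const y))
      exact h.congr_deriv (by ring)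
    have := (Real.hasDerivAt_log hs.ne').comp x hi
    exact this.congr_deriv (by ring)
  have hlog2 : HasDerivAt (fun x : ℝ => Real.log (1 + x)) (1/(1 + x)) x := by
    have hi : HasDerivAt (fun x : ℝ => 1 + x) 1 x := by
      simpa using (hasDerivAt_id x).const_add 1
    have := (Real.hasDerivAt_log h1x.ne').comp x hi
    exact this.congr_deriv (by ring)
  have hD : HasDerivAt (g1 y)
      ((1 - y) * ((1 - y)/(x + y - x*y) - 1/(1 + x)) / Real.log 2) x := by
    unfold g1
    exact ((((hlog1.sub hlog2).sub_const (Real.log (1 - y))).const_mul (1 - y)).div_const _)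
  convert hD using 2
  have hL : Real.log 2 ≠ 0 := by positivity
  have hs' : x + y - x*y ≠ 0 := hs.ne'
  have hx1' : x + 1 ≠ 0 := by linarith
  have h1x' : 1 + x ≠ 0 := by linarith
  rw [div_sub_div _ _ hs' h1x', mul_div_assoc', div_eq_div_iff (mul_ne_zero hx1' hs') (mul_ne_zero hs' h1x')]
  ring

theorem g_strictConcave (y : ℝ) (hy : 1/2 < y) (hy1 : y < 1) :
    StrictConcaveOn ℝ (Set.Ioo 0 1)
      (fun x : ℝ => (2 - 2*y) * binEntropy ((1 - x)/2) - binEntropy ((1 - y)*(1 - x))) ∧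
    ∀ x ∈ Set.Ioo (0:ℝ) 1,
      Real.log 2 *
        deriv (deriv (fun x : ℝ =>
          (2 - 2*y) * binEntropy ((1 - x)/2) - binEntropy ((1 - y)*(1 - x)))) x
        = -((1 - y)*(2*y - 1))/((x + 1)*(x + y - x*y)) ∧
      -((1 - y)*(2*y - 1))/((x + 1)*(x + y - x*y)) < 0 := by
  have hL : (0:ℝ) < Real.log 2 := by positivity
  set f := fun x : ℝ => (2 - 2*y) * binEntropy ((1 - x)/2) - binEntropy ((1 - y)*(1 - x)) with hf
  -- deriv f = g1 y on a neighborhood of each point of Ioo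
  have hderiv2 : ∀ x ∈ Set.Ioo (0:ℝ) 1,
      deriv (deriv f) x = -((1 - y)*(2*y - 1))/((x + 1)*(x + y - x*y)) / Real.log 2 := by
    intro x hx
    have hEq : deriv f =ᶠ[nhds x] g1 y := by
      filter_upwards [isOpen_Ioo.mem_nhds hx] with z hz
      exact (hasDerivAt_g y hy hy1 hz).deriv
    rw [hEq.deriv_eq]
    exact (hasDerivAt_g1 y hy hy1 hx).deriv
  have hneg : ∀ x ∈ Set.Ioo (0:ℝ) 1,
      -((1 - y)*(2*y - 1))/((x + 1)*(x + y - x*y)) < 0 := by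
    intro x hx
    obtain ⟨hx0, hx1⟩ := hx
    have hs : 0 < x + y - x*y := aux_pos hy hy1 hx0 hx1
    have hnum : 0 < (1 - y)*(2*y - 1) := by nlinarith
    have hden : 0 < (x + 1)*(x + y - x*y) := by positivity
    exact div_neg_of_neg_of_pos (by linarith) hden
  constructor
  · apply strictConcaveOn_of_deriv2_neg (convex_Ioo 0 1)
    · apply ContinuousOn.sub
      · apply ContinuousOn.mul continuousOn_const
        apply Continuous.continuousOn
        have : Continuous (fun p : ℝ => Real.binEntropy p / Real.log 2) :=
          Real.binEntropy_continuous.div_const _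
        have hc : Continuous (fun x : ℝ => binEntropy ((1 - x)/2)) := by
          simp only [binEntropy_eq]
          fun_prop
        exact hc
      · apply Continuous.continuousOn
        simp only [binEntropy_eq]
        fun_prop
    · intro x hx
      rw [interior_Ioo] at hx
      have h2 : deriv^[2] f x = deriv (deriv f) x := by
        simp [Function.iterate_succ, Function.comp]
      rw [h2, hderiv2 x hx]
      exact div_neg_of_neg_of_pos (by
        have := hneg x hx
        have hs : 0 < x + y - x*y := aux_pos hy hy1 hx.1 hx.2
        exact this) hL
  · intro x hx
    refine ⟨?_, hneg x hx⟩
    rw [hderiv2 x hx, mul_comm, div_mul_cancel₀ _ hL.ne']
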